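/- q-Lucas theorem: let p be a positive integer, write n = n₁p + n₀ and k = k₁p + k₀ with 0 ≤ n₀, k₀ < p. Then binom(n,k)_q ≡ binom(n₁,k₁) · binom(n₀,k₀)_q modulo the p-th cyclotomic polynomial Φ_p(q) in ℤ[q]. -/
import Mathlib


open Polynomial

/-- The Gaussian (q-)binomial coefficient `binom(n,k)_q` as a polynomial in `ℤ[q]`,
    defined by the q-Pascal recurrence. -/
noncomputable def qBinom : ℕ → ℕ → Polynomial ℤ
  | _, 0 => 1
  | 0, _ + 1 => 0
  | n + 1, k + 1 => qBinom n k + X ^ (k + 1) * qBinom n (k + 1)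

lemma qBinom_zero_right (n : ℕ) : qBinom n 0 = 1 := by cases n <;> rfl

lemma qBinom_succ (n k : ℕ) :
    qBinom (n + 1) (k + 1) = qBinom n k + X ^ (k + 1) * qBinom n (k + 1) := rfl

lemma qBinom_eq_zero : ∀ n k : ℕ, n < k → qBinom n k = 0
  | 0, _ + 1, _ => rfl
  | n + 1, k + 1, h => by
    rw [qBinom_succ, qBinom_eq_zero n k (by omega), qBinom_eq_zero n (k + 1) (by omega)]
    ring

lemma qBinom_self : ∀ n : ℕ, qBinom n n = 1
  | 0 => rfl
  | n + 1 => by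
    rw [qBinom_succ, qBinom_self n, qBinom_eq_zero n (n + 1) (by omega)]
    ring

lemma qBinom_one : ∀ m : ℕ, qBinom (m + 1) 1 = X ^ m + qBinom m 1
  | 0 => by
    show qBinom 0 0 + X ^ (0 + 1) * qBinom 0 (0 + 1) = X ^ 0 + qBinom 0 1
    show (1 : Polynomial ℤ) + X ^ (0 + 1) * 0 = X ^ 0 + 0
    ring
  | m + 1 => by
    have h1 : qBinom (m + 1 + 1) 1
        = qBinom (m + 1) 0 + X ^ 1 * qBinom (m + 1) 1 := qBinom_succ (m + 1) 0
    have h2 : qBinom (m + 1) 1 = qBinom m 0 + X ^ 1 * qBinom m 1 := qBinom_succ m 0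
    rw [qBinom_zero_right] at h1 h2
    rw [h1]
    linear_combination (X : Polynomial ℤ) * qBinom_one m - h2

/-- The dual q-Pascal recurrence. -/
lemma qBinom_dual : ∀ n k : ℕ, k ≤ n →
    qBinom (n + 1) (k + 1) = X ^ (n - k) * qBinom n k + qBinom n (k + 1)
  | 0, 0, _ => by
    rw [qBinom_succ, qBinom_zero_right, qBinom_eq_zero 0 1 (by omega)]
    ring
  | n + 1, 0, _ => by
    simp only [Nat.zero_add, Nat.sub_zero, qBinom_zero_right, mul_one]
    exact qBinom_one (n + 1)
  | n + 1, k + 1, h => by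
    rcases eq_or_lt_of_le h with hk | hk
    · -- k + 1 = n + 1
      have hk' : k = n := by omega
      subst hk'
      rw [qBinom_self, qBinom_self, qBinom_eq_zero (k + 1) (k + 1 + 1) (by omega)]
      simp
    · -- k + 1 ≤ n
      have hkn : k + 1 ≤ n := by omega
      have e1 := qBinom_succ (n + 1) (k + 1)
      have e2 := qBinom_dual n k (by omega)
      have e3 := qBinom_dual n (k + 1) hkn
      have e4 := qBinom_succ n k
      have e5 := qBinom_succ n (k + 1)
      obtain ⟨j, rfl⟩ : ∃ j, n = k + 1 + j := ⟨n - (k + 1), by omega⟩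
      rw [show k + 1 + j - k = j + 1 from by omega] at e2
      rw [show k + 1 + j - (k + 1) = j from by omega] at e3
      rw [show k + 1 + j + 1 - (k + 1) = j + 1 from by omega]
      linear_combination e1 + e2 - X ^ (j + 1) * e4 + X ^ (k + 1 + 1) * e3 - e5
  termination_by n k => n
  decreasing_by all_goals omega

lemma qBinom_ratio (n k : ℕ) (h : k ≤ n) :
    (X ^ (n - k) - 1) * qBinom n k = (X ^ (k + 1) - 1) * qBinom n (k + 1) := by
  have h1 := qBinom_succ n k
  have h2 := qBinom_dual n k h
  linear_combination h1 - h2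

lemma cyclo_dvd_of_rat {p : ℕ} {a : Polynomial ℤ}
    (h : cyclotomic p ℚ ∣ a.map (Int.castRingHom ℚ)) : cyclotomic p ℤ ∣ a := by
  rw [← map_cyclotomic p (Int.castRingHom ℚ)] at h
  exact (map_dvd_map _ Int.cast_injective (cyclotomic.monic p ℤ)).mp h

lemma cyclo_not_dvd {p k : ℕ} (hk0 : 0 < k) (hkp : k < p) :
    ¬ cyclotomic p ℚ ∣ (X ^ k - 1 : Polynomial ℚ) := by
  intro hdvd
  have hp : 0 < p := by omega
  have hζ := Complex.isPrimitiveRoot_exp p hp.ne'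
  have hdvd2 : cyclotomic p ℂ ∣ (X ^ k - 1 : Polynomial ℂ) := by
    have := Polynomial.map_dvd (algebraMap ℚ ℂ) hdvd
    rwa [map_cyclotomic, Polynomial.map_sub, Polynomial.map_pow, Polynomial.map_X,
      Polynomial.map_one] at this
  have hroot : (cyclotomic p ℂ).IsRoot (Complex.exp (2 * Real.pi * Complex.I / p)) :=
    hζ.isRoot_cyclotomic hp
  have h0 : Complex.exp (2 * Real.pi * Complex.I / p) ^ k = 1 := by
    have := eval_eq_zero_of_dvd_of_eval_eq_zero hdvd2 hroot
    simp only [eval_sub, eval_pow, eval_X, eval_one, sub_eq_zero] at this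
    exact this
  have := Nat.le_of_dvd hk0 (hζ.dvd_of_pow_eq_one k h0)
  omega

lemma cyclo_prime {p : ℕ} (hp : 0 < p) : Prime (cyclotomic p ℚ) :=
  UniqueFactorizationMonoid.irreducible_iff_prime.mp (cyclotomic.irreducible_rat hp)

lemma cyclo_dvd_qBinom (p : ℕ) : ∀ k : ℕ, 0 < k → k < p → cyclotomic p ℤ ∣ qBinom p k := by
  intro k
  induction k with
  | zero => omega
  | succ j ih =>
    intro _ hlt
    have hp : 0 < p := by omega
    have hratio := qBinom_ratio p j (by omega)
    have hL : cyclotomic p ℤ ∣ (X ^ (p - j) - 1) * qBinom p j := by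
      rcases Nat.eq_zero_or_pos j with rfl | hj
      · rw [qBinom_zero_right, mul_one, Nat.sub_zero]
        exact cyclotomic.dvd_X_pow_sub_one p ℤ
      · exact Dvd.dvd.mul_left (ih hj (by omega)) _
    rw [hratio] at hL
    have hQ := Polynomial.map_dvd (Int.castRingHom ℚ) hL
    rw [map_cyclotomic, Polynomial.map_mul] at hQ
    have hQ2 : cyclotomic p ℚ ∣ (qBinom p (j + 1)).map (Int.castRingHom ℚ) := by
      rcases (cyclo_prime hp).2.2 _ _ hQ with h | h
      · exfalso
        apply cyclo_not_dvd (p := p) (k := j + 1) (by omega) hlt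
        rwa [Polynomial.map_sub, Polynomial.map_pow, Polynomial.map_X,
          Polynomial.map_one] at h
      · exact h
    exact cyclo_dvd_of_rat hQ2

lemma qLucas_key (p : ℕ) (hp : 0 < p) : ∀ n : ℕ,
    (∀ k, k < p → cyclotomic p ℤ ∣ qBinom (n + p) k - qBinom n k) ∧
    (∀ k, cyclotomic p ℤ ∣ qBinom (n + p) (k + p) - (qBinom n (k + p) + qBinom n k)) := by
  obtain ⟨m, rfl⟩ : ∃ m, p = m + 1 := ⟨p - 1, by omega⟩
  have hXp : cyclotomic (m + 1) ℤ ∣ X ^ (m + 1) - 1 := cyclotomic.dvd_X_pow_sub_one _ _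
  intro n
  induction n with
  | zero =>
    constructor
    · intro k hk
      rcases Nat.eq_zero_or_pos k with rfl | hk0
      · simp [qBinom_zero_right]
      · rw [zero_add, qBinom_eq_zero 0 k hk0, sub_zero]
        exact cyclo_dvd_qBinom (m + 1) k hk0 hk
    · intro k
      rcases Nat.eq_zero_or_pos k with rfl | hk0
      · rw [zero_add, qBinom_self, qBinom_eq_zero 0 (m + 1) (by omega),
          qBinom_zero_right]
        simp
      · rw [zero_add, qBinom_eq_zero (m + 1) (k + (m + 1)) (by omega),
          qBinom_eq_zero 0 (k + (m + 1)) (by omega), qBinom_eq_zero 0 k hk0]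
        simp
  | succ n ih =>
    obtain ⟨ih1, ih2⟩ := ih
    constructor
    · intro k hk
      rcases Nat.eq_zero_or_pos k with rfl | hk0
      · simp [qBinom_zero_right]
      · obtain ⟨j, rfl⟩ : ∃ j, k = j + 1 := ⟨k - 1, by omega⟩
        rw [show n + 1 + (m + 1) = n + (m + 1) + 1 from by omega,
          qBinom_succ, qBinom_succ n j]
        have d1 := ih1 j (by omega)
        have d2 := ih1 (j + 1) hk
        have he : qBinom (n + (m + 1)) j + X ^ (j + 1) * qBinom (n + (m + 1)) (j + 1) -
            (qBinom n j + X ^ (j + 1) * qBinom n (j + 1))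
            = (qBinom (n + (m + 1)) j - qBinom n j)
              + X ^ (j + 1) * (qBinom (n + (m + 1)) (j + 1) - qBinom n (j + 1)) := by ring
        rw [he]
        exact dvd_add d1 (Dvd.dvd.mul_left d2 _)
    · intro k
      rcases Nat.eq_zero_or_pos k with rfl | hk0
      · -- k = 0
        have d1 := ih1 m (by omega)
        have d2 := ih2 0
        rw [zero_add] at d2
        rw [zero_add, show n + 1 + (m + 1) = n + (m + 1) + 1 from by omega,
          show (m + 1 : ℕ) = m + 1 from rfl, qBinom_succ (n + (m + 1)) m,
          qBinom_succ n m, qBinom_zero_right]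
        rw [qBinom_zero_right] at d2
        have he : qBinom (n + (m + 1)) m + X ^ (m + 1) * qBinom (n + (m + 1)) (m + 1) -
            (qBinom n m + X ^ (m + 1) * qBinom n (m + 1) + 1)
            = (qBinom (n + (m + 1)) m - qBinom n m)
              + X ^ (m + 1) * (qBinom (n + (m + 1)) (m + 1) - (qBinom n (m + 1) + 1))
              + (X ^ (m + 1) - 1) := by ring
        rw [he]
        exact dvd_add (dvd_add d1 (Dvd.dvd.mul_left d2 _)) hXp
      · obtain ⟨j, rfl⟩ : ∃ j, k = j + 1 := ⟨k - 1, by omega⟩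
        have d1 := ih2 j
        have d2 := ih2 (j + 1)
        rw [show j + 1 + (m + 1) = j + m + 1 + 1 from by omega] at d2
        rw [show j + (m + 1) = j + m + 1 from by omega] at d1
        rw [show j + 1 + (m + 1) = j + m + 1 + 1 from by omega,
          show n + 1 + (m + 1) = n + (m + 1) + 1 from by omega,
          qBinom_succ (n + (m + 1)) (j + m + 1), qBinom_succ n (j + m + 1),
          qBinom_succ n j]
        have he : qBinom (n + (m + 1)) (j + m + 1)
              + X ^ (j + m + 1 + 1) * qBinom (n + (m + 1)) (j + m + 1 + 1) -
            (qBinom n (j + m + 1) + X ^ (j + m + 1 + 1) * qBinom n (j + m + 1 + 1)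
              + (qBinom n j + X ^ (j + 1) * qBinom n (j + 1)))
            = (qBinom (n + (m + 1)) (j + m + 1) - (qBinom n (j + m + 1) + qBinom n j))
              + X ^ (j + m + 1 + 1) * (qBinom (n + (m + 1)) (j + m + 1 + 1)
                - (qBinom n (j + m + 1 + 1) + qBinom n (j + 1)))
              + X ^ (j + 1) * (X ^ (m + 1) - 1) * qBinom n (j + 1) := by ring
        rw [he]
        exact dvd_add (dvd_add d1 (Dvd.dvd.mul_left d2 _))
          ((hXp.mul_left (X ^ (j + 1))).mul_right _)

/-- q-Lucas theorem: writing `n = n₁p + n₀` and `k = k₁p + k₀` with `0 ≤ n₀, k₀ < p`,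
    we have `binom(n,k)_q ≡ binom(n₁,k₁) · binom(n₀,k₀)_q (mod Φ_p(q))` in `ℤ[q]`. -/
theorem q_lucas (p n k n₁ n₀ k₁ k₀ : ℕ) (hp : 0 < p)
    (hn : n = n₁ * p + n₀) (hn0 : n₀ < p)
    (hk : k = k₁ * p + k₀) (hk0 : k₀ < p) :
    cyclotomic p ℤ ∣ (qBinom n k - C ((n₁.choose k₁ : ℤ)) * qBinom n₀ k₀) := by
  subst hn hk
  induction n₁ generalizing k₁ with
  | zero =>
    rcases Nat.eq_zero_or_pos k₁ with rfl | hk1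
    · simp
    · obtain ⟨j, rfl⟩ : ∃ j, k₁ = j + 1 := ⟨k₁ - 1, by omega⟩
      rw [zero_mul, zero_add, qBinom_eq_zero n₀ ((j + 1) * p + k₀) (by nlinarith),
        Nat.choose_zero_succ]
      simp
  | succ m ih =>
    have hK := qLucas_key p hp (m * p + n₀)
    rcases Nat.eq_zero_or_pos k₁ with rfl | hk1
    · have h1 := hK.1 k₀ hk0
      have h2 := ih 0
      rw [zero_mul, zero_add] at h2
      rw [show (m + 1) * p + n₀ = m * p + n₀ + p from by ring, zero_mul, zero_add]
      have := dvd_add h1 h2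
      convert this using 1
      simp only [Nat.choose_zero_right, Nat.cast_one, map_one]
      ring
    · obtain ⟨j, rfl⟩ : ∃ j, k₁ = j + 1 := ⟨k₁ - 1, by omega⟩
      have h1 := hK.2 (j * p + k₀)
      have h2 := ih (j + 1)
      have h3 := ih j
      rw [show (m + 1) * p + n₀ = m * p + n₀ + p from by ring,
        show (j + 1) * p + k₀ = j * p + k₀ + p from by ring] at *
      have := dvd_add (dvd_add h1 h2) h3
      convert this using 1
      rw [Nat.choose_succ_succ]
      push_cast
      rw [map_add]
      ring
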